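/- Let $J$ be the matrix of the previous statement. Then every eigenvalue of $J$ has strictly negative real part. -/

import Mathlib

open Matrix

/-!
The Jacobian is block lower triangular, so its characteristic polynomial factors as
`(X + b₁) (X + b₂) q`, where `q = X² + (λ₁u₁ + λ₂u₂) X + (λ₁λ₂ + η₁η₂) u₁u₂` is the characteristic
polynomial of the upper-left `2 × 2` block. A root `z = x + iy` of a real quadratic `z² + sz + t`
with `s, t > 0` has negative real part: the imaginary part of the equation reads `y (2x + s) = 0`,
and when `y = 0` the real root `x` cannot be nonnegative since then `x² + sx + t > 0`.
-/

theorem Complex.re_neg_of_sq_add_mul_add_eq_zero {s t : ℝ} (hs : 0 < s) (ht : 0 < t) {z : ℂ}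
    (hz : z ^ 2 + s * z + t = 0) : z.re < 0 := by
  have hre : z.re ^ 2 - z.im ^ 2 + s * z.re + t = 0 := by
    simpa [sq] using congrArg Complex.re hz
  have him : z.im * (2 * z.re + s) = 0 := by
    have := congrArg Complex.im hz
    simp only [sq, add_im, mul_im, ofReal_re, ofReal_im, zero_im] at this
    linear_combination this
  rcases mul_eq_zero.mp him with hy | hx
  · by_contra! hx
    rw [hy] at hre
    nlinarith
  · linarith

theorem Matrix.eval_charpoly_blockLowerTriangular {R : Type*} [CommRing R]
    (p q r s e f d₁ d₂ z : R) :
    (!![p, q, 0, 0; r, s, 0, 0; 0, e, d₁, 0; f, 0, 0, d₂]).charpoly.eval z =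
      (z - d₁) * (z - d₂) * ((z - p) * (z - s) - q * r) := by
  rw [eval_charpoly]
  simp [det_succ_row_zero, Fin.sum_univ_succ, Fin.succAbove]
  ring

theorem stmt_4_general (lam₁ lam₂ η₁ η₂ a₁ a₂ b₁ b₂ u₁ u₂ : ℝ)
    (hlam₁ : 0 < lam₁) (hlam₂ : 0 < lam₂) (hη₁ : 0 < η₁) (hη₂ : 0 < η₂)
    (hb₁ : 0 < b₁) (hb₂ : 0 < b₂)
    (hu₁ : 0 < u₁) (hu₂ : 0 < u₂) :
    let J : Matrix (Fin 4) (Fin 4) ℂ :=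
      !![(-lam₁ * u₁ : ℂ), η₁ * u₁, 0, 0;
         -η₂ * u₂, -lam₂ * u₂, 0, 0;
         0, a₁, -b₁, 0;
         a₂, 0, 0, -b₂]
    ∀ μ : ℂ, μ ∈ spectrum ℂ J → μ.re < 0 := by
  intro J μ hμ
  rw [mem_spectrum_iff_isRoot_charpoly, Polynomial.IsRoot.def,
    eval_charpoly_blockLowerTriangular] at hμ
  rcases mul_eq_zero.mp hμ with hμ | hμ
  · rcases mul_eq_zero.mp hμ with hμ | hμ
    · simpa [sub_eq_zero.mp hμ] using hb₁
    · simpa [sub_eq_zero.mp hμ] using hb₂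
  · refine Complex.re_neg_of_sq_add_mul_add_eq_zero
      (s := lam₁ * u₁ + lam₂ * u₂) (t := (lam₁ * lam₂ + η₁ * η₂) * u₁ * u₂)
      (by positivity) (by positivity) ?_
    push_cast
    linear_combination hμ

/-- Every (complex) eigenvalue of the Jacobian at the coexistence equilibrium has strictly
negative real part. -/
theorem stmt_4 (lam₁ lam₂ η₁ η₂ a₁ a₂ b₁ b₂ u₁ u₂ : ℝ)
    (hlam₁ : 0 < lam₁) (hlam₂ : 0 < lam₂) (hη₁ : 0 < η₁) (hη₂ : 0 < η₂)
    (ha₁ : 0 < a₁) (ha₂ : 0 < a₂) (hb₁ : 0 < b₁) (hb₂ : 0 < b₂)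
    (hu₁ : 0 < u₁) (hu₂ : 0 < u₂) :
    let J : Matrix (Fin 4) (Fin 4) ℂ :=
      !![(-lam₁ * u₁ : ℂ), η₁ * u₁, 0, 0;
         -η₂ * u₂, -lam₂ * u₂, 0, 0;
         0, a₁, -b₁, 0;
         a₂, 0, 0, -b₂]
    ∀ μ : ℂ, μ ∈ spectrum ℂ J → μ.re < 0 :=
  stmt_4_general lam₁ lam₂ η₁ η₂ a₁ a₂ b₁ b₂ u₁ u₂ hlam₁ hlam₂ hη₁ hη₂ hb₁ hb₂ hu₁ hu₂
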